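/- Let $N, D$ be natural numbers with $1 \le D < N$, let $L > 0$, and for each $1 \le l \le N$ let $k_l : [0,L] \to \mathbb{R}$ be continuous with $k_l > 0$ for $l \le D$ and $k_l < 0$ for $l > D$, and let $I_l, S_l > 0$ satisfy $I_l \le |k_l(x)| \le S_l$ for all $x \in [0,L]$. Assume $\big(\max_{1 \le l \le D} S_l\big) \big(\sum_{l=D+1}^{N} 1/I_l\big) < \frac{(N-D)^2}{D}$. Then there exists $C > 0$ such that for all continuous functions $g_1, \dots, g_N : [0,L] \to \mathbb{R}$: $\sum_{l=1}^{N} \int_0^L |k_l(x)| g_l(x)^2 \, dx \; - \; \frac{2}{N-D} \sum_{l=1}^{D} \sum_{j=D+1}^{N} \int_0^L |k_l(x)| g_l(x) g_j(x) \, dx \;\ge\; C \sum_{l=1}^{N} \int_0^L g_l(x)^2 \, dx$. -/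

import Mathlib

/-! Pointwise, write `a = |k(x)|`, `u = g(x)` and `m = N - D`; the cross term is
`(2/m) X Y` with `X = ∑_{l ≤ D} a_l u_l` and `Y = ∑_{j > D} u_j`. Weighted Cauchy–Schwarz gives
`X² ≤ (D max S) A` and `Y² ≤ (∑ 1/I_j) B`, where `A`, `B` are the energies `∑ a u²` of the two
groups, hence `2 X Y ≤ ρ (A + B)` with `ρ = √(D max S ∑ 1/I_j)`. The hypothesis says exactly
`ρ < m`, so the form is at least `(1 - ρ/m)(A + B) ≥ (1 - ρ/m) (min I) ∑ u²`; integrate. -/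

open Finset

section CrossTerm

variable {ι : Type*} {P Q : Finset ι} {a u : ι → ℝ} {α β : ℝ}

lemma sq_sum_mul_le_mul_sum_mul_sq (ha : ∀ i ∈ P, 0 ≤ a i) (hα : ∑ i ∈ P, a i ≤ α) :
    (∑ i ∈ P, a i * u i) ^ 2 ≤ α * ∑ i ∈ P, a i * u i ^ 2 :=
  calc (∑ i ∈ P, a i * u i) ^ 2 ≤ (∑ i ∈ P, a i) * ∑ i ∈ P, a i * u i ^ 2 :=
        sum_sq_le_sum_mul_sum_of_sq_le_mul P ha (fun i hi => mul_nonneg (ha i hi) (sq_nonneg _))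
          fun i _ => le_of_eq (by ring)
    _ ≤ α * ∑ i ∈ P, a i * u i ^ 2 :=
        mul_le_mul_of_nonneg_right hα (sum_nonneg fun i hi => mul_nonneg (ha i hi) (sq_nonneg _))

lemma sq_sum_le_mul_sum_mul_sq (ha : ∀ j ∈ Q, 0 < a j) (hβ : ∑ j ∈ Q, 1 / a j ≤ β) :
    (∑ j ∈ Q, u j) ^ 2 ≤ β * ∑ j ∈ Q, a j * u j ^ 2 :=
  calc (∑ j ∈ Q, u j) ^ 2 ≤ (∑ j ∈ Q, 1 / a j) * ∑ j ∈ Q, a j * u j ^ 2 :=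
        sum_sq_le_sum_mul_sum_of_sq_le_mul Q (fun j hj => (one_div_pos.2 (ha j hj)).le)
          (fun j hj => mul_nonneg (ha j hj).le (sq_nonneg _))
          fun j hj => le_of_eq (by field_simp [(ha j hj).ne'])
    _ ≤ β * ∑ j ∈ Q, a j * u j ^ 2 :=
        mul_le_mul_of_nonneg_right hβ (sum_nonneg fun j hj => mul_nonneg (ha j hj).le (sq_nonneg _))

lemma two_mul_sum_mul_sum_le (haP : ∀ i ∈ P, 0 ≤ a i) (hα : ∑ i ∈ P, a i ≤ α)
    (haQ : ∀ j ∈ Q, 0 < a j) (hβ : ∑ j ∈ Q, 1 / a j ≤ β) :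
    2 * ((∑ i ∈ P, a i * u i) * ∑ j ∈ Q, u j)
      ≤ √(α * β) * (∑ i ∈ P, a i * u i ^ 2 + ∑ j ∈ Q, a j * u j ^ 2) := by
  have hA : 0 ≤ ∑ i ∈ P, a i * u i ^ 2 :=
    sum_nonneg fun i hi => mul_nonneg (haP i hi) (sq_nonneg _)
  have hB : 0 ≤ ∑ j ∈ Q, a j * u j ^ 2 :=
    sum_nonneg fun j hj => mul_nonneg (haQ j hj).le (sq_nonneg _)
  have hαβ : 0 ≤ α * β := mul_nonneg ((sum_nonneg haP).trans hα)
    ((sum_nonneg fun j hj => (one_div_pos.2 (haQ j hj)).le).trans hβ)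
  rw [mul_add]
  refine two_mul_le_add_of_sq_le_mul (by positivity) (by positivity) ?_
  calc ((∑ i ∈ P, a i * u i) * ∑ j ∈ Q, u j) ^ 2
      = (∑ i ∈ P, a i * u i) ^ 2 * (∑ j ∈ Q, u j) ^ 2 := mul_pow _ _ _
    _ ≤ (α * ∑ i ∈ P, a i * u i ^ 2) * (β * ∑ j ∈ Q, a j * u j ^ 2) :=
        mul_le_mul (sq_sum_mul_le_mul_sum_mul_sq haP hα) (sq_sum_le_mul_sum_mul_sq haQ hβ)
          (sq_nonneg _) (mul_nonneg ((sum_nonneg haP).trans hα) hA)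
    _ = (√(α * β) * ∑ i ∈ P, a i * u i ^ 2) * (√(α * β) * ∑ j ∈ Q, a j * u j ^ 2) := by
        rw [mul_mul_mul_comm, mul_mul_mul_comm (√(α * β)), Real.mul_self_sqrt hαβ]

end CrossTerm

lemma sum_Icc_one_add_sum_Icc {M : Type*} [AddCommMonoid M] {D N : ℕ} (h : D ≤ N) (f : ℕ → M) :
    ∑ l ∈ Icc 1 D, f l + ∑ l ∈ Icc (D + 1) N, f l = ∑ l ∈ Icc 1 N, f l := by
  have Icc_one (n : ℕ) : Icc 1 n = Ioc 0 n := Icc_add_one_left_eq_Ioc 0 n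
  rw [Icc_one, Icc_one, Icc_add_one_left_eq_Ioc]
  exact sum_Ioc_consecutive f (Nat.zero_le D) h

lemma mul_sum_sq_le_sum_sub_cross {D N : ℕ} (hDN : D ≤ N) {a u : ℕ → ℝ} {α β m c : ℝ}
    (hm : 0 < m) (haP : ∀ l ∈ Icc 1 D, 0 ≤ a l) (hα : ∑ l ∈ Icc 1 D, a l ≤ α)
    (haQ : ∀ j ∈ Icc (D + 1) N, 0 < a j) (hβ : ∑ j ∈ Icc (D + 1) N, 1 / a j ≤ β)
    (hc : ∀ l ∈ Icc 1 N, c ≤ (1 - √(α * β) / m) * a l) :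
    c * ∑ l ∈ Icc 1 N, u l ^ 2
      ≤ ∑ l ∈ Icc 1 N, a l * u l ^ 2
        - 2 / m * ∑ l ∈ Icc 1 D, ∑ j ∈ Icc (D + 1) N, a l * u l * u j := by
  have hcross : 2 / m * ∑ l ∈ Icc 1 D, ∑ j ∈ Icc (D + 1) N, a l * u l * u j
      ≤ √(α * β) / m * ∑ l ∈ Icc 1 N, a l * u l ^ 2 := by
    rw [← sum_mul_sum, div_mul_eq_mul_div, div_mul_eq_mul_div, ← sum_Icc_one_add_sum_Icc hDN]
    exact div_le_div_of_nonneg_right (two_mul_sum_mul_sum_le haP hα haQ hβ) hm.le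
  calc c * ∑ l ∈ Icc 1 N, u l ^ 2 = ∑ l ∈ Icc 1 N, c * u l ^ 2 := mul_sum _ _ _
    _ ≤ ∑ l ∈ Icc 1 N, (1 - √(α * β) / m) * (a l * u l ^ 2) :=
        sum_le_sum fun l hl => by
          rw [← mul_assoc]; exact mul_le_mul_of_nonneg_right (hc l hl) (sq_nonneg _)
    _ ≤ _ := by rw [← mul_sum]; linarith

lemma intervalIntegral.integral_finset_sum_of_continuousOn {ι : Type*} {s : Finset ι}
    {f : ι → ℝ → ℝ} {a b : ℝ} (hab : a ≤ b) (hf : ∀ i ∈ s, ContinuousOn (f i) (Set.Icc a b)) :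
    ∫ x in a..b, ∑ i ∈ s, f i x = ∑ i ∈ s, ∫ x in a..b, f i x :=
  integral_finsetSum fun i hi => (hf i hi).intervalIntegrable_of_Icc hab

open intervalIntegral in
lemma mul_sum_integral_sq_le_sum_integral_sub_cross {D N : ℕ} (hDN : D ≤ N) {L m C : ℝ}
    (hL : 0 ≤ L) {a g : ℕ → ℝ → ℝ} (ha : ∀ l ∈ Icc 1 N, ContinuousOn (a l) (Set.Icc 0 L))
    (hg : ∀ l ∈ Icc 1 N, ContinuousOn (g l) (Set.Icc 0 L))
    (hpt : ∀ x ∈ Set.Icc 0 L, C * ∑ l ∈ Icc 1 N, g l x ^ 2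
      ≤ ∑ l ∈ Icc 1 N, a l x * g l x ^ 2
        - 2 / m * ∑ l ∈ Icc 1 D, ∑ j ∈ Icc (D + 1) N, a l x * g l x * g j x) :
    C * ∑ l ∈ Icc 1 N, ∫ x in 0..L, g l x ^ 2
      ≤ (∑ l ∈ Icc 1 N, ∫ x in 0..L, a l x * g l x ^ 2)
        - 2 / m * ∑ l ∈ Icc 1 D, ∑ j ∈ Icc (D + 1) N, ∫ x in 0..L, a l x * g l x * g j x := by
  have hP : ∀ l ∈ Icc 1 D, l ∈ Icc 1 N := fun l hl => Icc_subset_Icc_right hDN hl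
  have hQ : ∀ l ∈ Icc (D + 1) N, l ∈ Icc 1 N := fun l hl => Icc_subset_Icc_left (by omega) hl
  have hsq : ∀ l ∈ Icc 1 N, ContinuousOn (fun x => g l x ^ 2) (Set.Icc 0 L) :=
    fun l hl => (hg l hl).pow 2
  have hag : ∀ l ∈ Icc 1 N, ContinuousOn (fun x => a l x * g l x ^ 2) (Set.Icc 0 L) :=
    fun l hl => (ha l hl).mul (hsq l hl)
  have hagg : ∀ l ∈ Icc 1 D, ∀ j ∈ Icc (D + 1) N,
      ContinuousOn (fun x => a l x * g l x * g j x) (Set.Icc 0 L) :=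
    fun l hl j hj => ((ha l (hP l hl)).mul (hg l (hP l hl))).mul (hg j (hQ j hj))
  have hcross : ∀ l ∈ Icc 1 D,
      ContinuousOn (fun x => ∑ j ∈ Icc (D + 1) N, a l x * g l x * g j x) (Set.Icc 0 L) :=
    fun l hl => continuousOn_finsetSum _ (hagg l hl)
  have hint {f : ℝ → ℝ} (hf : ContinuousOn f (Set.Icc 0 L)) :
      IntervalIntegrable f MeasureTheory.volume 0 L :=
    hf.intervalIntegrable_of_Icc hL
  have hsq_int := hint (continuousOn_finsetSum _ hsq)
  have hag_int := hint (continuousOn_finsetSum _ hag)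
  have hcross_int := hint (continuousOn_finsetSum _ hcross)
  have hmono := integral_mono_on hL (hsq_int.const_mul _)
    (hag_int.sub (hcross_int.const_mul _)) hpt
  rwa [integral_const_mul, integral_sub hag_int (hcross_int.const_mul _), integral_const_mul,
    integral_finset_sum_of_continuousOn hL hsq, integral_finset_sum_of_continuousOn hL hag,
    integral_finset_sum_of_continuousOn hL hcross,
    sum_congr rfl fun l hl => integral_finset_sum_of_continuousOn hL (hagg l hl)] at hmono

theorem stmt_5 (N D : ℕ) (hD : 1 ≤ D) (hDN : D < N) (L : ℝ) (hL : 0 < L)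
    (k : ℕ → ℝ → ℝ)
    (hkc : ∀ l ∈ Finset.Icc 1 N, ContinuousOn (k l) (Set.Icc 0 L))
    (I S : ℕ → ℝ)
    (hI : ∀ l ∈ Finset.Icc 1 N, 0 < I l)
    (hbound : ∀ l ∈ Finset.Icc 1 N, ∀ x ∈ Set.Icc (0 : ℝ) L,
        I l ≤ |k l x| ∧ |k l x| ≤ S l)
    (hmax : ((Finset.Icc 1 D).sup' (Finset.nonempty_Icc.mpr (by omega)) S) *
        (∑ l ∈ Finset.Icc (D + 1) N, 1 / I l) < ((N : ℝ) - (D : ℝ)) ^ 2 / (D : ℝ)) :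
    ∃ C : ℝ, 0 < C ∧ ∀ g : ℕ → ℝ → ℝ,
      (∀ l ∈ Finset.Icc 1 N, ContinuousOn (g l) (Set.Icc 0 L)) →
      (∑ l ∈ Finset.Icc 1 N, ∫ x in (0 : ℝ)..L, |k l x| * (g l x) ^ 2)
        - (2 / ((N : ℝ) - (D : ℝ))) * (∑ l ∈ Finset.Icc 1 D, ∑ j ∈ Finset.Icc (D + 1) N,
            ∫ x in (0 : ℝ)..L, |k l x| * g l x * g j x)
      ≥ C * ∑ l ∈ Finset.Icc 1 N, ∫ x in (0 : ℝ)..L, (g l x) ^ 2 := by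
  have hP : ∀ l ∈ Icc 1 D, l ∈ Icc 1 N := fun l hl => Icc_subset_Icc_right hDN.le hl
  have hQ : ∀ l ∈ Icc (D + 1) N, l ∈ Icc 1 N := fun l hl => Icc_subset_Icc_left (by omega) hl
  set m : ℝ := (N : ℝ) - D
  set M := (Icc 1 D).sup' (nonempty_Icc.mpr hD) S
  set β := ∑ j ∈ Icc (D + 1) N, 1 / I j
  set ρ := √(D * M * β)
  have hm : 0 < m := sub_pos.2 (by exact_mod_cast hDN)
  have hρ : 0 < 1 - ρ / m := by
    have := (lt_div_iff₀ (by positivity : (0 : ℝ) < D)).1 hmax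
    rw [sub_pos, div_lt_one hm, Real.sqrt_lt' hm]
    linarith
  obtain ⟨Imin, hImin, hIle⟩ : ∃ Imin > 0, ∀ l ∈ Icc 1 N, Imin ≤ I l :=
    ⟨_, (lt_inf'_iff (nonempty_Icc.mpr (by omega))).2 hI, fun l hl => inf'_le I hl⟩
  refine ⟨(1 - ρ / m) * Imin, mul_pos hρ hImin, fun g hg =>
    mul_sum_integral_sq_le_sum_integral_sub_cross (a := fun l x => |k l x|) hDN.le hL.le
      (fun l hl => (hkc l hl).abs) hg fun x hx => ?_⟩
  have hα : ∑ l ∈ Icc 1 D, |k l x| ≤ D * M :=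
    calc ∑ l ∈ Icc 1 D, |k l x| ≤ #(Icc 1 D) • M :=
          sum_le_card_nsmul _ _ _ fun l hl => (hbound l (hP l hl) x hx).2.trans (le_sup' S hl)
      _ = D * M := by simp
  have hβ : ∑ j ∈ Icc (D + 1) N, 1 / |k j x| ≤ β :=
    sum_le_sum fun j hj => one_div_le_one_div_of_le (hI j (hQ j hj)) (hbound j (hQ j hj) x hx).1
  exact mul_sum_sq_le_sum_sub_cross hDN.le hm (fun l _ => abs_nonneg _) hα
    (fun j hj => (hI j (hQ j hj)).trans_le (hbound j (hQ j hj) x hx).1) hβ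
    fun l hl => mul_le_mul_of_nonneg_left ((hIle l hl).trans (hbound l hl x hx).1) hρ.le
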